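/- Let (a,b,c,d,e,f) ∈ ℝ⁶ be a nonzero tuple, let I ⊆ ℝ be an open interval, and let y : ℝ → ℝ be five times continuously differentiable on I satisfying a·x² + 2b·x·y(x) + c·y(x)² + 2d·x + 2e·y(x) + f = 0 for all x ∈ I. Then y satisfies the Monge equation y⁽⁵⁾(x)·y''(x)² − 5·y''(x)·y'''(x)·y⁽⁴⁾(x) + (40/9)·y'''(x)³ = 0 for all x ∈ I. That is, every graph lying on a plane quadric is a solution of the Monge equation. -/

import Mathlib

/-!
Write `B = b x + c y + e` (half of `∂u/∂y` along the graph), so that `B' = b + c y'`.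
Differentiating `u(x, y(x)) = 0` five times gives relations that, from the third derivative on,
are linear and homogeneous in `(B', c, B)`, with a determinant equal to `9 y''` times the Monge
expression. Eliminating them gives `B · Monge = 0`; where `B = 0 ≠ B'` they force
`y'' = y''' = 0`; and where `B = B' = 0` the conic is the double line `B² = 0`, on which `y` is
affine.
-/

open Set Filter

section Calculus

variable {𝕜 : Type*} [NontriviallyNormedField 𝕜] {E : Type*} [NormedAddCommGroup E]
  [NormedSpace 𝕜 E] {s : Set 𝕜}

theorem IsOpen.forall_hasDerivAt_eq_zero (hs : IsOpen s) {g g' : 𝕜 → E}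
    (hg : ∀ x ∈ s, g x = 0) (hg' : ∀ x ∈ s, HasDerivAt g (g' x) x) :
    ∀ x ∈ s, g' x = 0 := fun x hx =>
  (hg' x hx).unique <| (hasDerivAt_const x 0).congr_of_eventuallyEq <|
    eventually_of_mem (hs.mem_nhds hx) hg

theorem IsOpen.hasDerivAt_iteratedDeriv (hs : IsOpen s) {y : 𝕜 → E} {n : WithTop ℕ∞}
    (hy : ContDiffOn 𝕜 n y s) {k : ℕ} (hk : k < n) {x : 𝕜} (hx : x ∈ s) :
    HasDerivAt (iteratedDeriv k y) (iteratedDeriv (k + 1) y x) x := by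
  have hdiff : DifferentiableAt 𝕜 (iteratedDerivWithin k y s) x :=
    (hy.differentiableOn_iteratedDerivWithin hk hs.uniqueDiffOn x hx).differentiableAt
      (hs.mem_nhds hx)
  rw [iteratedDeriv_succ]
  exact (hdiff.congr_of_eventuallyEq <| eventually_of_mem (hs.mem_nhds hx) fun z hz =>
    (iteratedDerivWithin_of_isOpen hs hz).symm).hasDerivAt

end Calculus

theorem HasDerivAt.linear_add_const_mul_add_const {y : ℝ → ℝ} {y' x : ℝ} (b c e : ℝ)
    (hy : HasDerivAt y y' x) : HasDerivAt (fun z => b * z + c * y z + e) (b + c * y') x :=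
  ((((hasDerivAt_id x).const_mul b).add (hy.const_mul c)).add_const e).congr_deriv (by simp)

theorem monge_eq_zero_of_relations {K : Type*} [Field K] [CharZero K] {A B c q r s t : K}
    (h₃ : 3 * q * A + r * B = 0) (h₄ : 4 * r * A + 3 * c * q ^ 2 + s * B = 0)
    (h₅ : 5 * s * A + 10 * c * q * r + t * B = 0) (hAB : A ≠ 0 ∨ B ≠ 0) :
    t * q ^ 2 - 5 * q * r * s + 40 / 9 * r ^ 3 = 0 := by
  by_cases hB : B = 0
  · have hA : A ≠ 0 := hAB.resolve_right (not_not.2 hB)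
    subst hB
    have hq : q = 0 := by simpa [hA] using h₃
    have hr : r = 0 := by simpa [hA, hq] using h₄
    simp [hq, hr]
  · have key : B * (t * q ^ 2 - 5 * q * r * s + 40 / 9 * r ^ 3) = 0 := by
      linear_combination q ^ 2 * h₅ - (10 / 3 * q * r) * h₄
        - (5 / 3 * s * q - 40 / 9 * r ^ 2) * h₃
    exact (mul_eq_zero.1 key).resolve_left hB

section GraphOnQuadric

variable {a b c d e f : ℝ} {s : Set ℝ} {y y₁ y₂ y₃ y₄ y₅ : ℝ → ℝ}

theorem quadric_graph_relations (hs : IsOpen s)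
    (hy : ∀ x ∈ s, HasDerivAt y (y₁ x) x) (hy₁ : ∀ x ∈ s, HasDerivAt y₁ (y₂ x) x)
    (hy₂ : ∀ x ∈ s, HasDerivAt y₂ (y₃ x) x) (hy₃ : ∀ x ∈ s, HasDerivAt y₃ (y₄ x) x)
    (hy₄ : ∀ x ∈ s, HasDerivAt y₄ (y₅ x) x)
    (hquad : ∀ x ∈ s,
      a * x ^ 2 + 2 * b * x * y x + c * y x ^ 2 + 2 * d * x + 2 * e * y x + f = 0) :
    ∀ x ∈ s, a * x + b * y x + d + y₁ x * (b * x + c * y x + e) = 0 ∧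
      a + 2 * b * y₁ x + c * y₁ x ^ 2 + y₂ x * (b * x + c * y x + e) = 0 ∧
      3 * y₂ x * (b + c * y₁ x) + y₃ x * (b * x + c * y x + e) = 0 ∧
      4 * y₃ x * (b + c * y₁ x) + 3 * c * y₂ x ^ 2 + y₄ x * (b * x + c * y x + e) = 0 ∧
      5 * y₄ x * (b + c * y₁ x) + 10 * c * y₂ x * y₃ x + y₅ x * (b * x + c * y x + e) = 0 := by
  have hB x (hx : x ∈ s) := (hy x hx).linear_add_const_mul_add_const b c e
  have hA x (hx : x ∈ s) := ((hy₁ x hx).const_mul c).const_add b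
  have h₁ : ∀ x ∈ s, a * x + b * y x + d + y₁ x * (b * x + c * y x + e) = 0 := by
    have h := hs.forall_hasDerivAt_eq_zero hquad fun x hx =>
      (((((((hasDerivAt_pow 2 x).const_mul a).add
        (((hasDerivAt_id x).const_mul (2 * b)).mul (hy x hx))).add
        (((hy x hx).pow 2).const_mul c)).add ((hasDerivAt_id x).const_mul (2 * d))).add
        ((hy x hx).const_mul (2 * e))).add_const f).congr_deriv
        (g' := 2 * (a * x + b * y x + d + y₁ x * (b * x + c * y x + e)))
        (by simp only [id]; push_cast; ring)
    exact fun x hx => (mul_eq_zero.1 (h x hx)).resolve_left two_ne_zero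
  have h₂ : ∀ x ∈ s, a + 2 * b * y₁ x + c * y₁ x ^ 2 + y₂ x * (b * x + c * y x + e) = 0 :=
    hs.forall_hasDerivAt_eq_zero h₁ fun x hx =>
      (((((hasDerivAt_id x).const_mul a).add ((hy x hx).const_mul b)).add_const d).add
        ((hy₁ x hx).mul (hB x hx))).congr_deriv (by simp; ring)
  have h₃ : ∀ x ∈ s, 3 * y₂ x * (b + c * y₁ x) + y₃ x * (b * x + c * y x + e) = 0 :=
    hs.forall_hasDerivAt_eq_zero h₂ fun x hx =>
      (((((hy₁ x hx).const_mul (2 * b)).const_add a).add (((hy₁ x hx).pow 2).const_mul c)).add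
        ((hy₂ x hx).mul (hB x hx))).congr_deriv (by push_cast; ring)
  have h₄ : ∀ x ∈ s,
      4 * y₃ x * (b + c * y₁ x) + 3 * c * y₂ x ^ 2 + y₄ x * (b * x + c * y x + e) = 0 :=
    hs.forall_hasDerivAt_eq_zero h₃ fun x hx =>
      ((((hy₂ x hx).const_mul 3).mul (hA x hx)).add ((hy₃ x hx).mul (hB x hx))).congr_deriv
        (by ring)
  have h₅ : ∀ x ∈ s,
      5 * y₄ x * (b + c * y₁ x) + 10 * c * y₂ x * y₃ x + y₅ x * (b * x + c * y x + e) = 0 :=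
    hs.forall_hasDerivAt_eq_zero h₄ fun x hx =>
      (((((hy₃ x hx).const_mul 4).mul (hA x hx)).add (((hy₂ x hx).pow 2).const_mul (3 * c))).add
        ((hy₄ x hx).mul (hB x hx))).congr_deriv (by push_cast; ring)
  exact fun x hx => ⟨h₁ x hx, h₂ x hx, h₃ x hx, h₄ x hx, h₅ x hx⟩

/-- `c · u = (b x + c y + e)² + P(x)` with `P(x) = (ac - b²) x² + 2 (cd - be) x + (cf - e²)`;
the relations at `x` force `P(x) = P'(x) = P''(x) = 0`, hence `P = 0`. -/
theorem quadric_graph_eq_line (hcoef : ¬(a = 0 ∧ b = 0 ∧ c = 0 ∧ d = 0 ∧ e = 0 ∧ f = 0))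
    (hquad : ∀ x ∈ s,
      a * x ^ 2 + 2 * b * x * y x + c * y x ^ 2 + 2 * d * x + 2 * e * y x + f = 0)
    {x : ℝ} (hx : x ∈ s) (h₁ : a * x + b * y x + d + y₁ x * (b * x + c * y x + e) = 0)
    (h₂ : a + 2 * b * y₁ x + c * y₁ x ^ 2 + y₂ x * (b * x + c * y x + e) = 0)
    (hA : b + c * y₁ x = 0) (hB : b * x + c * y x + e = 0) :
    c ≠ 0 ∧ ∀ z ∈ s, b * z + c * y z + e = 0 := by
  have hc : c ≠ 0 := by
    rintro rfl
    obtain rfl : b = 0 := by simpa using hA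
    obtain rfl : e = 0 := by simpa using hB
    obtain rfl : a = 0 := by simpa using h₂
    obtain rfl : d = 0 := by simpa using h₁
    exact hcoef ⟨rfl, rfl, rfl, rfl, rfl, by simpa using hquad x hx⟩
  have hac : a * c - b ^ 2 = 0 := by
    linear_combination c * h₂ - (b + c * y₁ x) * hA - c * y₂ x * hB
  have hcd : c * d - b * e = 0 := by
    linear_combination c * h₁ - (c * y₁ x + b) * hB - x * hac
  have hcf : c * f - e ^ 2 = 0 := by
    linear_combination c * hquad x hx - (b * x + c * y x + e) * hB - x ^ 2 * hac - 2 * x * hcd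
  refine ⟨hc, fun z hz => pow_eq_zero_iff two_ne_zero |>.mp ?_⟩
  linear_combination c * hquad z hz - z ^ 2 * hac - 2 * z * hcd - hcf

theorem IsOpen.forall_deriv_deriv_eq_zero_of_line (hs : IsOpen s)
    (hy : ∀ x ∈ s, HasDerivAt y (y₁ x) x) (hy₁ : ∀ x ∈ s, HasDerivAt y₁ (y₂ x) x) (hc : c ≠ 0)
    (hline : ∀ x ∈ s, b * x + c * y x + e = 0) : ∀ x ∈ s, y₂ x = 0 := by
  have hA : ∀ x ∈ s, b + c * y₁ x = 0 := hs.forall_hasDerivAt_eq_zero hline fun x hx =>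
    (hy x hx).linear_add_const_mul_add_const b c e
  have hcy₂ : ∀ x ∈ s, c * y₂ x = 0 := hs.forall_hasDerivAt_eq_zero hA fun x hx =>
    ((hy₁ x hx).const_mul c).const_add b
  exact fun x hx => (mul_eq_zero.1 (hcy₂ x hx)).resolve_left hc

end GraphOnQuadric

/-- every graph `y = y(x)` lying on a plane quadric
`a·x² + 2b·x·y + c·y² + 2d·x + 2e·y + f = 0` with nonzero coefficient tuple
`(a,b,c,d,e,f)` is a solution of the Monge equation
`y⁽⁵⁾·y''² − 5·y''·y'''·y⁽⁴⁾ + (40/9)·y'''³ = 0`. -/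
theorem quadric_solves_monge (a b c d e f : ℝ)
    (hcoef : ¬(a = 0 ∧ b = 0 ∧ c = 0 ∧ d = 0 ∧ e = 0 ∧ f = 0))
    (α β : ℝ) (y : ℝ → ℝ) (hy : ContDiffOn ℝ 5 y (Set.Ioo α β))
    (hquad : ∀ x ∈ Set.Ioo α β,
      a * x ^ 2 + 2 * b * x * y x + c * (y x) ^ 2
        + 2 * d * x + 2 * e * y x + f = 0) :
    ∀ x ∈ Set.Ioo α β,
      iteratedDeriv 5 y x * (iteratedDeriv 2 y x) ^ 2
        - 5 * iteratedDeriv 2 y x * iteratedDeriv 3 y x * iteratedDeriv 4 y x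
        + (40 / 9) * (iteratedDeriv 3 y x) ^ 3 = 0 := by
  intro x hx
  have hI : IsOpen (Ioo α β) := isOpen_Ioo
  have hD (k : ℕ) (hk : k < 5) (z : ℝ) (hz : z ∈ Ioo α β) :=
    hI.hasDerivAt_iteratedDeriv hy (k := k) (by exact_mod_cast hk) hz
  have hD₀ : ∀ z ∈ Ioo α β, HasDerivAt y (iteratedDeriv 1 y z) z := by
    simpa using hD 0 (by norm_num)
  obtain ⟨h₁, h₂, h₃, h₄, h₅⟩ := quadric_graph_relations hI hD₀ (hD 1 (by norm_num))
    (hD 2 (by norm_num)) (hD 3 (by norm_num)) (hD 4 (by norm_num)) hquad x hx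
  by_cases hAB : b + c * iteratedDeriv 1 y x ≠ 0 ∨ b * x + c * y x + e ≠ 0
  · exact monge_eq_zero_of_relations h₃ h₄ h₅ hAB
  push Not at hAB
  obtain ⟨hc, hline⟩ := quadric_graph_eq_line hcoef hquad hx h₁ h₂ hAB.1 hAB.2
  have hq := hI.forall_deriv_deriv_eq_zero_of_line hD₀ (hD 1 (by norm_num)) hc hline
  have hr := hI.forall_hasDerivAt_eq_zero hq (hD 2 (by norm_num)) x hx
  simp [hq x hx, hr]
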